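/- Let M₀ be an admissible lattice in N₀ with M₀ ≠ τ(M₀) such that both M₀ + τ(M₀) and M₀ ∩ τ(M₀) are τ-stable, and set T₀ = M₀ + τ(M₀) (so M₀ ⊂¹ T₀ ⊂¹ M₀^∨). Then for every lattice S₀ with pM₀^∨ ⊂¹ S₀ ⊂¹ M₀, the pair (S₀, T₀) is a web pair for M₀. -/

import Mathlib

noncomputable section

namespace QURZ

variable {W₀ : Type*} [CommRing W₀]

/-- The length of `B / A`: the Krull dimension of the interval `[A, B]`
in the lattice of submodules. -/
noncomputable def relLength {M : Type*} [AddCommGroup M] [Module W₀ M]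
    (A B : Submodule W₀ M) : WithBot ℕ∞ :=
  Order.krullDim (Set.Icc A B)

/-- `SubIdx A B d` means `A ⊆ B` and the quotient `B/A` has length `d`
(written `A ⊂^d B` in the paper). -/
def SubIdx {M : Type*} [AddCommGroup M] [Module W₀ M]
    (A B : Submodule W₀ M) (d : ℕ) : Prop :=
  A ≤ B ∧ relLength A B = ((d : ℕ∞) : WithBot ℕ∞)

/-- The image `c • A` of a submodule `A` under scalar multiplication by `c`. -/
def smulLat {M : Type*} [AddCommGroup M] [Module W₀ M] (c : W₀) (A : Submodule W₀ M) :
    Submodule W₀ M where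
  carrier := {x | ∃ m ∈ A, c • m = x}
  zero_mem' := ⟨0, A.zero_mem, smul_zero c⟩
  add_mem' := by
    rintro a b ⟨m, hm, rfl⟩ ⟨n, hn, rfl⟩
    exact ⟨m + n, A.add_mem hm hn, smul_add c m n⟩
  smul_mem' := by
    rintro d x ⟨m, hm, rfl⟩
    exact ⟨d • m, A.smul_mem d hm, by rw [smul_smul, smul_smul, mul_comm]⟩

/-- The image of a submodule under a `σ₀`-semilinear map, where `σ₀` is a ring
automorphism. -/
def mapLat {M M' : Type*} [AddCommGroup M] [Module W₀ M] [AddCommGroup M'] [Module W₀ M']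
    {σ₀ : W₀ ≃+* W₀} (g : M →ₛₗ[(σ₀ : W₀ →+* W₀)] M') (A : Submodule W₀ M) :
    Submodule W₀ M' where
  carrier := g '' A
  zero_mem' := ⟨0, A.zero_mem, map_zero g⟩
  add_mem' := by
    rintro a b ⟨m, hm, rfl⟩ ⟨n, hn, rfl⟩
    exact ⟨m + n, A.add_mem hm hn, map_add g m n⟩
  smul_mem' := by
    rintro c x ⟨m, hm, rfl⟩
    refine ⟨σ₀.symm c • m, A.smul_mem _ hm, ?_⟩
    rw [map_smulₛₗ]
    simp

variable {K₀ : Type*} [Field K₀] [Algebra W₀ K₀]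
variable {N₀ : Type*} [AddCommGroup N₀] [Module K₀ N₀] [Module W₀ N₀] [IsScalarTower W₀ K₀ N₀]

/-- A lattice: a finitely generated `W₀`-submodule spanning the ambient space over `K₀`. -/
def IsLattice (A : Submodule W₀ N₀) : Prop :=
  A.FG ∧ Submodule.span K₀ (A : Set N₀) = ⊤

/-- The dual lattice with respect to a bilinear form, consisting of the vectors
pairing into `W₀` with all elements of `A`. -/
def dualLat (form : N₀ →ₗ[K₀] N₀ →ₗ[K₀] K₀) (A : Submodule W₀ N₀) : Submodule W₀ N₀ where
  carrier := {x | ∀ y ∈ A, form x y ∈ (algebraMap W₀ K₀).range}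
  zero_mem' := fun y _ => by rw [map_zero, LinearMap.zero_apply]; exact zero_mem _
  add_mem' := by
    intro a b ha hb y hy
    rw [map_add, LinearMap.add_apply]
    exact add_mem (ha y hy) (hb y hy)
  smul_mem' := by
    intro c x hx y hy
    rw [← IsScalarTower.algebraMap_smul K₀ c x, map_smul, LinearMap.smul_apply, smul_eq_mul]
    exact mul_mem (RingHom.mem_range_self _ c) (hx y hy)

/-- An admissible lattice: `p M₀^∨ ⊆ M₀ ⊂² M₀^∨` and `p τ(M₀^∨) ⊆ M₀ ⊂² τ(M₀^∨)`.
These are the `𝔽`-points of the reduced quaternionic unitary Rapoport–Zink space `ℳ`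
with paramodular level. -/
def IsAdmissible (p : ℕ) (form : N₀ →ₗ[K₀] N₀ →ₗ[K₀] K₀)
    {σ₀ : W₀ ≃+* W₀} (τ : N₀ →ₛₗ[(σ₀ : W₀ →+* W₀)] N₀) (M₀ : Submodule W₀ N₀) : Prop :=
  IsLattice (K₀ := K₀) M₀ ∧
  smulLat (p : W₀) (dualLat form M₀) ≤ M₀ ∧
  SubIdx M₀ (dualLat form M₀) 2 ∧
  smulLat (p : W₀) (mapLat τ (dualLat form M₀)) ≤ M₀ ∧
  SubIdx M₀ (mapLat τ (dualLat form M₀)) 2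

/-- A web pair `(S₀, T₀)` for an admissible lattice `M₀`:
`pM₀^∨ ⊂¹ S₀ ⊂¹ M₀ ⊂¹ T₀ ⊂¹ M₀^∨`, `pτ(T₀^∨) ⊆ S₀ ⊆ τ(T₀^∨)` and
`pτ(S₀^∨) ⊆ T₀ ⊆ τ(S₀^∨)`.  Web pairs for `M₀` are the points of the fiber over `M₀`
of the projection from Iwahori level `ℳ_Iw(𝔽)` to `ℳ(𝔽)`. -/
def IsWebPair (p : ℕ) (form : N₀ →ₗ[K₀] N₀ →ₗ[K₀] K₀)
    {σ₀ : W₀ ≃+* W₀} (τ : N₀ →ₛₗ[(σ₀ : W₀ →+* W₀)] N₀)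
    (M₀ S₀ T₀ : Submodule W₀ N₀) : Prop :=
  IsLattice (K₀ := K₀) S₀ ∧ IsLattice (K₀ := K₀) T₀ ∧
  SubIdx (smulLat (p : W₀) (dualLat form M₀)) S₀ 1 ∧
  SubIdx S₀ M₀ 1 ∧ SubIdx M₀ T₀ 1 ∧ SubIdx T₀ (dualLat form M₀) 1 ∧
  smulLat (p : W₀) (mapLat τ (dualLat form T₀)) ≤ S₀ ∧
  S₀ ≤ mapLat τ (dualLat form T₀) ∧
  smulLat (p : W₀) (mapLat τ (dualLat form S₀)) ≤ T₀ ∧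
  T₀ ≤ mapLat τ (dualLat form S₀)

/-!
`T₀ = M₀ + τ(M₀)` is integral for the form: `M₀ ⊆ M₀^∨` and `M₀ ⊆ τ(M₀^∨) = τ(M₀)^∨` give
integrality on `M₀ × M₀` and `M₀ × τ(M₀)`, and `τ` carries the first onto `τ(M₀) × τ(M₀)`.
Hence `M₀ ⊆ T₀ ⊆ T₀^∨ ⊆ M₀^∨`, and both ends are strict: `T₀ = M₀` would give
`M₀ ∩ τ(M₀) = τ(M₀)`, whose τ-stability forces `τ(M₀) = M₀`; `T₀ = M₀^∨` would give
`M₀^∨ ⊆ M₀^∨∨ = M₀`. So `M₀ ⊂² M₀^∨` splits as `M₀ ⊂¹ T₀ ⊂¹ M₀^∨`. Since `T₀` is τ-stable,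
`τ(T₀^∨) = T₀^∨`, and the web pair conditions follow from the chain
`pM₀^∨ ⊆ S₀ ⊆ M₀ ⊆ T₀ ⊆ T₀^∨ ⊆ M₀^∨` together with `pS₀^∨ ⊆ M₀^∨∨ = M₀` and
`T₀ ⊆ τ(M₀^∨) ⊆ τ(S₀^∨)`.
-/

section KrullDim

variable {α β : Type*} [Preorder α] [Preorder β]

lemma _root_.Order.krullDim_add_one_le_of_strictMono_of_lt (f : α → β) (hf : StrictMono f)
    (b : β) (hb : ∀ a, f a < b) : Order.krullDim α + 1 ≤ Order.krullDim β := by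
  rcases isEmpty_or_nonempty α with hα | hα
  · simp [Order.krullDim_eq_bot]
  rw [← Order.krullDim_WithTop]
  exact Order.krullDim_le_of_strictMono (@WithTop.recTopCoe α (fun _ => β) b f)
    (WithTop.strictMono_iff.mpr ⟨hf, hb⟩)

lemma _root_.Order.krullDim_add_one_le_of_strictMono_of_gt (f : α → β) (hf : StrictMono f)
    (b : β) (hb : ∀ a, b < f a) : Order.krullDim α + 1 ≤ Order.krullDim β := by
  rcases isEmpty_or_nonempty α with hα | hα
  · simp [Order.krullDim_eq_bot]
  rw [← Order.krullDim_withBot]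
  exact Order.krullDim_le_of_strictMono (@WithBot.recBotCoe α (fun _ => β) b f)
    (WithBot.strictMono_iff.mpr ⟨hf, hb⟩)

lemma _root_.Order.krullDim_Icc_add_one_le_of_lt_right {a b c : α} (hac : a ≤ c) (hcb : c < b) :
    Order.krullDim (Set.Icc a c) + 1 ≤ Order.krullDim (Set.Icc a b) :=
  Order.krullDim_add_one_le_of_strictMono_of_lt (Set.inclusion (Set.Icc_subset_Icc_right hcb.le))
    (fun _ _ h => h) ⟨b, hac.trans hcb.le, le_rfl⟩ fun x => x.2.2.trans_lt hcb

lemma _root_.Order.krullDim_Icc_add_one_le_of_lt_left {a b c : α} (hac : a < c) (hcb : c ≤ b) :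
    Order.krullDim (Set.Icc c b) + 1 ≤ Order.krullDim (Set.Icc a b) :=
  Order.krullDim_add_one_le_of_strictMono_of_gt (Set.inclusion (Set.Icc_subset_Icc_left hac.le))
    (fun _ _ h => h) ⟨a, le_rfl, hac.le.trans hcb⟩ fun x => hac.trans_le x.2.1

end KrullDim

lemma _root_.ENat.WithBot.eq_one_of_one_le_of_add_one_le_two {x : WithBot ℕ∞} (h₁ : 1 ≤ x)
    (h₂ : x + 1 ≤ 2) : x = 1 :=
  le_antisymm (ENat.WithBot.add_le_add_one_right_iff.mp h₂) h₁

section Length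

variable {V : Type*} [AddCommGroup V] [Module W₀ V] {A B C : Submodule W₀ V}

lemma SubIdx.ne_of_two (h : SubIdx A B 2) : A ≠ B := by
  rintro rfl
  have h₀ : relLength A A ≤ 0 :=
    Order.krullDim_nonpos_iff_forall_isMax.mpr fun x y _ => y.2.2.trans x.2.1
  rw [h.2] at h₀
  exact absurd h₀ (by decide)

lemma SubIdx.split_of_lt (h : SubIdx A B 2) (hAC : A < C) (hCB : C < B) :
    SubIdx A C 1 ∧ SubIdx C B 1 := by
  have hAB : relLength A B = 2 := h.2
  have one_le {X Y : Submodule W₀ V} (hXY : X < Y) : 1 ≤ relLength X Y :=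
    Order.one_le_krullDim_iff.mpr ⟨⟨X, le_rfl, hXY.le⟩, ⟨Y, hXY.le, le_rfl⟩, hXY⟩
  refine ⟨⟨hAC.le, ENat.WithBot.eq_one_of_one_le_of_add_one_le_two (one_le hAC) ?_⟩,
    ⟨hCB.le, ENat.WithBot.eq_one_of_one_le_of_add_one_le_two (one_le hCB) ?_⟩⟩
  · exact hAB ▸ Order.krullDim_Icc_add_one_le_of_lt_right hAC.le hCB
  · exact hAB ▸ Order.krullDim_Icc_add_one_le_of_lt_left hAC hCB.le

end Length

section Semilinear

variable {V : Type*} [AddCommGroup V] [Module W₀ V] {σ₀ : W₀ ≃+* W₀}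
  {τ : V →ₛₗ[(σ₀ : W₀ →+* W₀)] V} {A B : Submodule W₀ V}

lemma mapLat_mono (h : A ≤ B) : mapLat τ A ≤ mapLat τ B := Submodule.map_mono h

lemma mapLat_injective (hτ : Function.Injective τ) : Function.Injective (mapLat τ) :=
  Submodule.map_injective_of_injective hτ

lemma smulLat_mono {c : W₀} (h : A ≤ B) : smulLat c A ≤ smulLat c B := by
  rintro _ ⟨m, hm, rfl⟩
  exact ⟨m, h hm, rfl⟩

lemma mapLat_smulLat (c : W₀) : mapLat τ (smulLat c A) = smulLat (σ₀ c) (mapLat τ A) := by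
  ext x
  constructor
  · rintro ⟨_, ⟨m, hm, rfl⟩, rfl⟩
    exact ⟨τ m, ⟨m, hm, rfl⟩, (τ.map_smulₛₗ c m).symm⟩
  · rintro ⟨_, ⟨m, hm, rfl⟩, rfl⟩
    exact ⟨c • m, ⟨m, hm, rfl⟩, τ.map_smulₛₗ c m⟩

end Semilinear

section Duality

variable {form : N₀ →ₗ[K₀] N₀ →ₗ[K₀] K₀} {A B : Submodule W₀ N₀}

lemma dualLat_antitone : Antitone (dualLat (W₀ := W₀) form) :=
  fun _ _ h _ hx y hy => hx y (h hy)

lemma dualLat_sup : dualLat form (A ⊔ B) = dualLat form A ⊓ dualLat form B := by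
  refine le_antisymm (le_inf (dualLat_antitone le_sup_left) (dualLat_antitone le_sup_right)) ?_
  rintro x ⟨hxA, hxB⟩ y hy
  obtain ⟨a, ha, b, hb, rfl⟩ := Submodule.mem_sup.mp hy
  rw [map_add]
  exact add_mem (hxA a ha) (hxB b hb)

lemma le_dualLat_comm (halt : form.IsAlt) : A ≤ dualLat form B ↔ B ≤ dualLat form A := by
  suffices ∀ {A B : Submodule W₀ N₀}, A ≤ dualLat form B → B ≤ dualLat form A from
    ⟨this, this⟩
  intro A B h y hy x hx
  rw [← halt.neg]
  exact neg_mem (h hx y hy)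

lemma smulLat_dualLat_le_dualLat {c : W₀} (h : smulLat c A ≤ B) :
    smulLat c (dualLat form B) ≤ dualLat form A := by
  rintro _ ⟨x, hx, rfl⟩ y hy
  rw [LinearMap.map_smul_of_tower, LinearMap.smul_apply, ← LinearMap.map_smul_of_tower]
  exact hx _ (h ⟨y, hy, rfl⟩)

lemma dualLat_eq_dualSubmodule : dualLat form A = LinearMap.BilinForm.dualSubmodule form A := by
  ext x
  simp [dualLat, LinearMap.BilinForm.mem_dualSubmodule, Submodule.mem_one]

lemma dualLat_eq_flip_dualSubmodule (halt : form.IsAlt) :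
    dualLat form A = LinearMap.BilinForm.dualSubmodule form.flip A := by
  ext x
  refine forall₂_congr fun y _ => ?_
  rw [LinearMap.flip_apply, ← halt.neg, Submodule.mem_one, ← RingHom.mem_range, neg_mem_iff]

lemma isLattice_iff : IsLattice (K₀ := K₀) A ↔ A.IsLattice K₀ :=
  ⟨fun h => ⟨h.1, h.2⟩, fun h => ⟨h.fg, h.span_eq_top⟩⟩

lemma IsLattice.mono (hA : IsLattice (K₀ := K₀) A) (hAB : A ≤ B) (hB : B.FG) :
    IsLattice (K₀ := K₀) B :=
  have := isLattice_iff.mp hA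
  isLattice_iff.mpr (.of_le_of_isLattice_of_fg K₀ hAB hB)

open scoped Pointwise in
lemma isLattice_smulLat (hA : IsLattice (K₀ := K₀) A) {c : W₀} (hc : algebraMap W₀ K₀ c ≠ 0) :
    IsLattice (K₀ := K₀) (smulLat c A) := by
  have := isLattice_iff.mp hA
  have : smulLat c A = (Units.mk0 _ hc) • A := by
    ext x
    simp [smulLat, Submodule.mem_smul_pointwise_iff_exists, algebraMap_smul]
  rw [this, isLattice_iff]
  infer_instance

end Duality

section LatticeBasis

variable [IsFractionRing W₀ K₀] {form : N₀ →ₗ[K₀] N₀ →ₗ[K₀] K₀} {A : Submodule W₀ N₀}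

lemma span_range_extendOfIsLattice [A.IsLattice K₀] {κ : Type*} (b : Module.Basis κ W₀ A) :
    Submodule.span W₀ (Set.range (b.extendOfIsLattice K₀)) = A := by
  have : Set.range (b.extendOfIsLattice K₀) = A.subtype '' Set.range b := by
    rw [← Set.range_comp]; ext; simp
  rw [this, Submodule.span_image, b.span_eq, Submodule.map_top, Submodule.range_subtype]

variable [IsDomain W₀] [IsPrincipalIdealRing W₀]

lemma dualLat_dualLat (halt : form.IsAlt) (hnd : form.Nondegenerate)
    (hA : IsLattice (K₀ := K₀) A) : dualLat form (dualLat form A) = A := by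
  have := isLattice_iff.mp hA
  rw [← span_range_extendOfIsLattice (Module.Free.chooseBasis W₀ A),
    dualLat_eq_flip_dualSubmodule halt, dualLat_eq_dualSubmodule]
  exact LinearMap.BilinForm.dualSubmodule_flip_dualSubmodule_of_basis form hnd _

lemma IsLattice.dualLat_fg (hnd : form.Nondegenerate) (hA : IsLattice (K₀ := K₀) A) :
    (dualLat form A).FG := by
  classical
  have := isLattice_iff.mp hA
  rw [← span_range_extendOfIsLattice (Module.Free.chooseBasis W₀ A), dualLat_eq_dualSubmodule,
    LinearMap.BilinForm.dualSubmodule_span_of_basis form hnd]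
  exact Submodule.fg_span (Set.finite_range _)

end LatticeBasis

section Frobenius

variable {σ : K₀ ≃+* K₀} {σ₀ : W₀ ≃+* W₀} {form : N₀ →ₗ[K₀] N₀ →ₗ[K₀] K₀}
  {τ : N₀ →ₛₗ[(σ₀ : W₀ →+* W₀)] N₀}

lemma map_mem_range_algebraMap_iff
    (hσ : ∀ c : W₀, algebraMap W₀ K₀ (σ₀ c) = σ (algebraMap W₀ K₀ c)) {a : K₀} :
    σ a ∈ (algebraMap W₀ K₀).range ↔ a ∈ (algebraMap W₀ K₀).range := by
  refine ⟨fun ⟨c, hc⟩ => ⟨σ₀.symm c, σ.injective ?_⟩, fun ⟨c, hc⟩ => ⟨σ₀ c, hc ▸ hσ c⟩⟩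
  rw [← hσ, RingEquiv.apply_symm_apply, hc]

lemma mapLat_dualLat (hσ : ∀ c : W₀, algebraMap W₀ K₀ (σ₀ c) = σ (algebraMap W₀ K₀ c))
    (hτ_surj : Function.Surjective τ) (hτ_form : ∀ x y, form (τ x) (τ y) = σ (form x y))
    (A : Submodule W₀ N₀) : mapLat τ (dualLat form A) = dualLat form (mapLat τ A) := by
  apply le_antisymm
  · rintro _ ⟨x, hx, rfl⟩ _ ⟨y, hy, rfl⟩
    rw [hτ_form, map_mem_range_algebraMap_iff hσ]
    exact hx y hy
  · intro x hx
    obtain ⟨x, rfl⟩ := hτ_surj x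
    refine ⟨x, fun y hy => ?_, rfl⟩
    rw [← map_mem_range_algebraMap_iff hσ, ← hτ_form]
    exact hx _ ⟨y, hy, rfl⟩

variable {M T : Submodule W₀ N₀}

lemma sup_mapLat_le_dualLat (halt : form.IsAlt)
    (hτ_dual : ∀ A, mapLat τ (dualLat form A) = dualLat form (mapLat τ A))
    (hM : M ≤ dualLat form M) (hMτ : M ≤ mapLat τ (dualLat form M)) :
    M ⊔ mapLat τ M ≤ dualLat form (M ⊔ mapLat τ M) := by
  rw [hτ_dual] at hMτ
  have hτM : mapLat τ M ≤ dualLat form (mapLat τ M) := hτ_dual M ▸ mapLat_mono hM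
  rw [dualLat_sup]
  exact sup_le (le_inf hM hMτ) (le_inf ((le_dualLat_comm halt).mp hMτ) hτM)

lemma lt_sup_mapLat (hτ : Function.Injective τ) (hne : M ≠ mapLat τ M)
    (h_inf_stable : mapLat τ (M ⊓ mapLat τ M) = M ⊓ mapLat τ M) : M < M ⊔ mapLat τ M := by
  refine left_lt_sup.mpr fun h => hne ?_
  rw [inf_eq_right.mpr h] at h_inf_stable
  exact (mapLat_injective hτ h_inf_stable).symm

lemma lt_dualLat_of_le_dualLat (hMM : dualLat form (dualLat form M) = M)
    (hne : M ≠ dualLat form M) (hMT : M ≤ T) (hT : T ≤ dualLat form T) :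
    T < dualLat form M := by
  refine (hT.trans (dualLat_antitone hMT)).lt_of_ne fun h => hne (le_antisymm ?_ ?_)
  · exact hMT.trans h.le
  · simpa [h, hMM] using hT

end Frobenius

theorem statement_12_general
    (p : ℕ)
    {W₀ : Type*} [CommRing W₀] [IsDomain W₀] [IsDiscreteValuationRing W₀]
    {K₀ : Type*} [Field K₀] [Algebra W₀ K₀] [IsFractionRing W₀ K₀]
    (hp_irr : Irreducible (p : W₀))
    (σ : K₀ ≃+* K₀) (σ₀ : W₀ ≃+* W₀)
    (hσ : ∀ c : W₀, algebraMap W₀ K₀ (σ₀ c) = σ (algebraMap W₀ K₀ c))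
    {N₀ : Type*} [AddCommGroup N₀] [Module K₀ N₀] [Module W₀ N₀] [IsScalarTower W₀ K₀ N₀]
    (form : N₀ →ₗ[K₀] N₀ →ₗ[K₀] K₀)
    (halt : ∀ x, form x x = 0)
    (hnondeg : ∀ x, (∀ y, form x y = 0) → x = 0)
    (τ : N₀ →ₛₗ[(σ₀ : W₀ →+* W₀)] N₀)
    (hτ_bij : Function.Bijective τ)
    (hτ_form : ∀ x y, form (τ x) (τ y) = σ (form x y))
    (M₀ : Submodule W₀ N₀) (hM₀ : IsAdmissible p form τ M₀)
    (hne : M₀ ≠ mapLat τ M₀)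
    (h_sup_stable : mapLat τ (M₀ ⊔ mapLat τ M₀) = M₀ ⊔ mapLat τ M₀)
    (h_inf_stable : mapLat τ (M₀ ⊓ mapLat τ M₀) = M₀ ⊓ mapLat τ M₀) :
    (SubIdx M₀ (M₀ ⊔ mapLat τ M₀) 1 ∧ SubIdx (M₀ ⊔ mapLat τ M₀) (dualLat form M₀) 1) ∧
    ∀ S₀ : Submodule W₀ N₀,
      SubIdx (smulLat (p : W₀) (dualLat form M₀)) S₀ 1 → SubIdx S₀ M₀ 1 →
      IsWebPair p form τ M₀ S₀ (M₀ ⊔ mapLat τ M₀) := by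
  obtain ⟨hM, -, hMMv, -, hMτMv⟩ := hM₀
  have hnd : form.Nondegenerate :=
    (LinearMap.IsAlt.isRefl halt).nondegenerate_iff_separatingLeft.mpr hnondeg
  have hMM := dualLat_dualLat halt hnd hM
  have hτ_dual := mapLat_dualLat hσ hτ_bij.2 hτ_form
  have hTT := sup_mapLat_le_dualLat halt hτ_dual hMMv.1 hMτMv.1
  have hsplit := hMMv.split_of_lt (lt_sup_mapLat hτ_bij.1 hne h_inf_stable)
    (lt_dualLat_of_le_dualLat hMM hMMv.ne_of_two le_sup_left hTT)
  refine ⟨hsplit, fun S₀ hS hSM => ?_⟩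
  have hτT : mapLat τ (dualLat form (M₀ ⊔ mapLat τ M₀)) = dualLat form (M₀ ⊔ mapLat τ M₀) := by
    rw [hτ_dual, h_sup_stable]
  have hp : algebraMap W₀ K₀ p ≠ 0 := IsFractionRing.to_map_eq_zero_iff.not.mpr hp_irr.ne_zero
  refine ⟨(isLattice_smulLat hM hp).mono ((smulLat_mono hMMv.1).trans hS.1) (hM.1.of_le hSM.1),
    hM.mono le_sup_left ((hM.dualLat_fg hnd).of_le hsplit.2.1), hS, hSM, hsplit.1, hsplit.2,
    (smulLat_mono (hτT.le.trans (dualLat_antitone le_sup_left))).trans hS.1,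
    (hSM.1.trans (le_sup_left.trans hTT)).trans hτT.ge, ?_,
    (sup_le hMτMv.1 (mapLat_mono hMMv.1)).trans (mapLat_mono (dualLat_antitone hSM.1))⟩
  rw [← map_natCast σ₀ p, ← mapLat_smulLat]
  exact (mapLat_mono (hMM ▸ smulLat_dualLat_le_dualLat hS.1)).trans le_sup_right

/-- Let `M₀` be admissible with `M₀ ≠ τ(M₀)` and both `M₀ + τ(M₀)`
and `M₀ ∩ τ(M₀)` τ-stable, and set `T₀ = M₀ + τ(M₀)` (so `M₀ ⊂¹ T₀ ⊂¹ M₀^∨`).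
Then for every lattice `S₀` with `pM₀^∨ ⊂¹ S₀ ⊂¹ M₀` the pair `(S₀, T₀)` is a
web pair for `M₀`. -/
theorem statement_12
    (p : ℕ) (hp : Nat.Prime p) (hp_odd : p ≠ 2)
    {W₀ : Type*} [CommRing W₀] [IsDomain W₀] [IsDiscreteValuationRing W₀]
    {K₀ : Type*} [Field K₀] [Algebra W₀ K₀] [IsFractionRing W₀ K₀]
    (hp_irr : Irreducible (p : W₀))
    (σ : K₀ ≃+* K₀) (σ₀ : W₀ ≃+* W₀)
    (hσ : ∀ c : W₀, algebraMap W₀ K₀ (σ₀ c) = σ (algebraMap W₀ K₀ c))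
    {N₀ : Type*} [AddCommGroup N₀] [Module K₀ N₀] [Module W₀ N₀] [IsScalarTower W₀ K₀ N₀]
    (hdim : Module.finrank K₀ N₀ = 4)
    (form : N₀ →ₗ[K₀] N₀ →ₗ[K₀] K₀)
    (halt : ∀ x, form x x = 0)
    (hnondeg : ∀ x, (∀ y, form x y = 0) → x = 0)
    (τ : N₀ →ₛₗ[(σ₀ : W₀ →+* W₀)] N₀)
    (hτ_bij : Function.Bijective τ)
    (hτ_semilinear : ∀ (a : K₀) (x : N₀), τ (a • x) = σ a • τ x)
    (hτ_form : ∀ x y, form (τ x) (τ y) = σ (form x y))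
    (M₀ : Submodule W₀ N₀) (hM₀ : IsAdmissible p form τ M₀)
    (hne : M₀ ≠ mapLat τ M₀)
    (h_sup_stable : mapLat τ (M₀ ⊔ mapLat τ M₀) = M₀ ⊔ mapLat τ M₀)
    (h_inf_stable : mapLat τ (M₀ ⊓ mapLat τ M₀) = M₀ ⊓ mapLat τ M₀) :
    (SubIdx M₀ (M₀ ⊔ mapLat τ M₀) 1 ∧ SubIdx (M₀ ⊔ mapLat τ M₀) (dualLat form M₀) 1) ∧
    ∀ S₀ : Submodule W₀ N₀,
      SubIdx (smulLat (p : W₀) (dualLat form M₀)) S₀ 1 → SubIdx S₀ M₀ 1 →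
      IsWebPair p form τ M₀ S₀ (M₀ ⊔ mapLat τ M₀) :=
  statement_12_general p hp_irr σ σ₀ hσ form halt hnondeg τ hτ_bij hτ_form M₀ hM₀ hne h_sup_stable
    h_inf_stable

end QURZ
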